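/- arXiv:1405.0135 — 3 statements merged into one kernel-verified Lean document; each statement's English description precedes it below -/
import Mathlib

section
/- Let X be a square-integrable real random variable on a probability space (Ω, F, P), let N be a positive integer, and let c ∈ ℝ. Then the infimum over all Borel-measurable maps ξ : ℝ → {1, …, N} of the quantization distortion D(ξ, X + c) = E[((X + c) − E[(X + c) | σ(ξ∘(X + c))])²] equals the infimum over all such ξ of D(ξ, X) = E[(X − E[X | σ(ξ∘X)])²]. In other words, the minimal N-level quantizer distortion of a real random variable is invariant under translation of the variable by any constant. -/
open MeasureTheory

/-- The quantization distortion of the real random variable `Y` under the `N`-level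
quantizer `ξ`: the mean squared error of the conditional expectation of `Y` given
the σ-algebra generated by the discrete random variable `ξ ∘ Y`. -/
noncomputable def quantDistortion {Ω : Type*} [MeasurableSpace Ω] (P : Measure Ω)
    (N : ℕ) (ξ : ℝ → Fin N) (Y : Ω → ℝ) : ℝ :=
  ∫ ω, (Y ω - (P[Y | MeasurableSpace.comap (fun ω => ξ (Y ω)) inferInstance]) ω) ^ 2 ∂P

/-! Translating `X` by `c` and translating the quantizer's input by `c` produce the same
σ-algebra `σ(ξ (X + c))`, and conditioning commutes with adding a constant. Hence
`D(ξ, X + c) = D(ξ (· + c), X)`, and `ξ ↦ ξ (· + c)` is a bijection of the measurable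
quantizers, so the two infima range over the same set of values. -/

def MeasurableEquiv.precompMeasurable {α α' β : Type*} [MeasurableSpace α]
    [MeasurableSpace α'] [MeasurableSpace β] (e : α ≃ᵐ α') :
    { f : α' → β // Measurable f } ≃ { f : α → β // Measurable f } where
  toFun f := ⟨f.1 ∘ e, f.2.comp e.measurable⟩
  invFun g := ⟨g.1 ∘ e.symm, g.2.comp e.symm.measurable⟩
  left_inv f := by ext; simp
  right_inv g := by ext; simp

lemma condExp_add_const {Ω : Type*} {m m₀ : MeasurableSpace Ω} {P : Measure Ω}
    [IsFiniteMeasure P] (hm : m ≤ m₀) {Y : Ω → ℝ} (hY : Integrable Y P) (c : ℝ) :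
    P[fun ω => Y ω + c | m] =ᵐ[P] fun ω => P[Y | m] ω + c := by
  have hsum := condExp_add hY (integrable_const c) m
  rw [condExp_const hm c] at hsum
  exact hsum

lemma quantDistortion_add_const {Ω : Type*} [MeasurableSpace Ω] (P : Measure Ω)
    [IsFiniteMeasure P] {X : Ω → ℝ} (hXm : Measurable X) (hX : Integrable X P)
    (N : ℕ) {ξ : ℝ → Fin N} (hξ : Measurable ξ) (c : ℝ) :
    quantDistortion P N ξ (fun ω => X ω + c) = quantDistortion P N (fun x => ξ (x + c)) X := by
  have hm : MeasurableSpace.comap (fun ω => ξ (X ω + c)) inferInstance ≤ ‹MeasurableSpace Ω› :=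
    (hξ.comp (hXm.add_const c)).comap_le
  refine integral_congr_ae ?_
  filter_upwards [condExp_add_const hm hX c] with ω hω
  simp only [hω]
  ring

theorem stmt5_general {Ω : Type*} [MeasurableSpace Ω] (P : Measure Ω) [IsProbabilityMeasure P]
    (X : Ω → ℝ) (hXm : Measurable X) (hX : MemLp X 2 P)
    (N : ℕ) (c : ℝ) :
    (⨅ ξ : { ξ : ℝ → Fin N // Measurable ξ },
      quantDistortion P N ξ.1 (fun ω => X ω + c))
    = ⨅ ξ : { ξ : ℝ → Fin N // Measurable ξ }, quantDistortion P N ξ.1 X :=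
  (MeasurableEquiv.addRight c).precompMeasurable.iInf_congr fun ξ =>
    (quantDistortion_add_const P hXm (hX.integrable one_le_two) N ξ.2 c).symm

/-- The minimal `N`-level quantizer distortion of a square-integrable real random
variable is invariant under translation of the variable by any constant `c`. -/
theorem stmt5 {Ω : Type*} [MeasurableSpace Ω] (P : Measure Ω) [IsProbabilityMeasure P]
    (X : Ω → ℝ) (hXm : Measurable X) (hX : MemLp X 2 P)
    (N : ℕ) (hN : 0 < N) (c : ℝ) :
    (⨅ ξ : { ξ : ℝ → Fin N // Measurable ξ },
      quantDistortion P N ξ.1 (fun ω => X ω + c))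
    = ⨅ ξ : { ξ : ℝ → Fin N // Measurable ξ }, quantDistortion P N ξ.1 X :=
  stmt5_general P X hXm hX N c
end

section
/- Let A, B ∈ ℝ and define F(x) = −(B/√(1+B²)) · φ(A/√(1+B²)) · Φ(x√(1+B²) − AB/√(1+B²)) − Φ(A − Bx) · φ(x). Then for every x ∈ ℝ, F is differentiable at x with F′(x) = x · φ(x) · Φ(A − Bx). -/
/-- The standard normal density. -/
noncomputable def stdGaussPDF (x : ℝ) : ℝ :=
  Real.exp (-x ^ 2 / 2) / Real.sqrt (2 * Real.pi)

/-- The standard normal cumulative distribution function. -/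
noncomputable def stdGaussCDF (x : ℝ) : ℝ :=
  ∫ t in Set.Iic x, stdGaussPDF t

/-!
Differentiate term by term. The derivative of `Φ(A - Bx) φ(x)` produces `-x φ(x) Φ(A - Bx)`
and a cross term `-B φ(A - Bx) φ(x)`; the first term of `F` is built to cancel the latter.
With `s = √(1 + B²)` one has `(A/s)² + (xs - AB/s)² = (A - Bx)² + x²`, and since `φ(a) φ(b)`
only depends on `a² + b²`, the chain rule applied to `Φ(xs - AB/s)` yields exactly
`B φ(A - Bx) φ(x)`.
-/

open MeasureTheory Set

theorem hasDerivAt_integral_Iic {E : Type*} [NormedAddCommGroup E] [NormedSpace ℝ E]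
    [CompleteSpace E] {f : ℝ → E} {x : ℝ} (hf : Integrable f) (hfx : ContinuousAt f x) :
    HasDerivAt (fun y => ∫ t in Iic y, f t) (f x) x := by
  have hsplit : ∀ y, ∫ t in Iic y, f t = (∫ t in Iic 0, f t) + ∫ t in (0 : ℝ)..y, f t :=
    fun y => eq_add_of_sub_eq' (intervalIntegral.integral_Iic_sub_Iic hf.integrableOn hf.integrableOn)
  rw [show (fun y => ∫ t in Iic y, f t) = _ from funext hsplit]
  exact (intervalIntegral.integral_hasDerivAt_right hf.intervalIntegrable
    hf.aestronglyMeasurable.stronglyMeasurableAtFilter hfx).const_add _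

theorem stdGaussPDF_eq_gaussianPDFReal : stdGaussPDF = ProbabilityTheory.gaussianPDFReal 0 1 := by
  ext x
  simp [stdGaussPDF, ProbabilityTheory.gaussianPDFReal, div_eq_inv_mul]

theorem continuous_stdGaussPDF : Continuous stdGaussPDF := by
  unfold stdGaussPDF
  fun_prop

theorem hasDerivAt_stdGaussPDF (x : ℝ) : HasDerivAt stdGaussPDF (-x * stdGaussPDF x) x := by
  have hexp : HasDerivAt (fun y : ℝ => -y ^ 2 / 2) (-x) x :=
    ((hasDerivAt_pow 2 x).neg.div_const 2).congr_deriv (by ring)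
  exact (hexp.exp.div_const (Real.sqrt (2 * Real.pi))).congr_deriv (by unfold stdGaussPDF; ring)

theorem hasDerivAt_stdGaussCDF (x : ℝ) : HasDerivAt stdGaussCDF (stdGaussPDF x) x :=
  hasDerivAt_integral_Iic (stdGaussPDF_eq_gaussianPDFReal ▸
    ProbabilityTheory.integrable_gaussianPDFReal 0 1) continuous_stdGaussPDF.continuousAt

theorem stdGaussPDF_mul_stdGaussPDF_eq {a b c d : ℝ} (h : a ^ 2 + b ^ 2 = c ^ 2 + d ^ 2) :
    stdGaussPDF a * stdGaussPDF b = stdGaussPDF c * stdGaussPDF d := by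
  simp only [stdGaussPDF, div_mul_div_comm, ← Real.exp_add]
  congr 2
  linarith

/-- Antiderivative identity from Owen's table of normal integrals:
`d/dx [ -(B/√(1+B²)) φ(A/√(1+B²)) Φ(x√(1+B²) - AB/√(1+B²)) - Φ(A - Bx) φ(x) ]
  = x φ(x) Φ(A - Bx)`. -/
theorem stmt6 (A B : ℝ) (x : ℝ) :
    HasDerivAt (fun x : ℝ =>
        -(B / Real.sqrt (1 + B ^ 2)) * stdGaussPDF (A / Real.sqrt (1 + B ^ 2)) *
            stdGaussCDF (x * Real.sqrt (1 + B ^ 2) - A * B / Real.sqrt (1 + B ^ 2))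
          - stdGaussCDF (A - B * x) * stdGaussPDF x)
      (x * stdGaussPDF x * stdGaussCDF (A - B * x)) x := by
  set s := Real.sqrt (1 + B ^ 2)
  have hs : s ≠ 0 := (Real.sqrt_pos.mpr (by positivity)).ne'
  have hs_sq : s ^ 2 = 1 + B ^ 2 := Real.sq_sqrt (by positivity)
  have hrot : stdGaussPDF (A / s) * stdGaussPDF (x * s - A * B / s)
      = stdGaussPDF (A - B * x) * stdGaussPDF x :=
    stdGaussPDF_mul_stdGaussPDF_eq <| by
      field_simp
      linear_combination (x ^ 2 * s ^ 2 - A ^ 2) * hs_sq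
  have hfirst := ((hasDerivAt_stdGaussCDF _).comp x
    (((hasDerivAt_id x).mul_const s).sub_const (A * B / s))).const_mul
    (-(B / s) * stdGaussPDF (A / s))
  have hsecond := ((hasDerivAt_stdGaussCDF _).comp x
    (((hasDerivAt_id x).const_mul B).const_sub A)).mul (hasDerivAt_stdGaussPDF x)
  refine (hfirst.sub hsecond).congr_deriv ?_
  simp only [id, Function.comp_apply, one_mul, mul_one]
  linear_combination (-B) * hrot
    - stdGaussPDF (A / s) * stdGaussPDF (x * s - A * B / s) * div_mul_cancel₀ B hs
end

section
/- Let σ > 0 and θ > 0. Let W be a standard Gaussian random variable on a probability space, and for m ∈ ℝ set X_m = m + σW, so X_m ∼ N(m, σ²). Let ξ : ℝ → {1, 2, 3} be the fixed quantizer with ξ(x) = 1 for x ≤ −θ, ξ(x) = 2 for −θ < x ≤ θ, and ξ(x) = 3 for x > θ, and define Γ(m) = E[(X_m − E[X_m | σ(ξ∘X_m)])²]. Then Γ is not constant: there exist m₁, m₂ ∈ ℝ with Γ(m₁) ≠ Γ(m₂). -/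
/-!
Write `X_m = m + σW`. Affine maps pass through conditional expectations, so
`Γ m = σ² (E[W²] - E[E[W | ξ(X_m)]²])`, and since `ξ(X_m)` takes finitely many values the
subtracted term is the explicit sum `∑ᵢ (∫_{Cᵢ} W)² / P(Cᵢ)` over the cells `Cᵢ = {ξ(X_m) = i}`.
At `m = θ` the top cell is `{W > 0}`, on which `W` has positive integral, so this sum is positive.
As `m → ∞` the top cell `{W > (θ - m)/σ}` eventually carries at least half of the mass; `W` being
centred, the sum is then at most twice the tail `∫_{W ≤ (θ - m)/σ} W²`, which tends to `0`.
Hence `Γ θ < Γ m` for large `m`.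
-/

open MeasureTheory ProbabilityTheory Filter Set Topology

section SetIntegral

variable {Ω : Type*} [MeasurableSpace Ω] {P : Measure Ω} {s : Set Ω} {f : Ω → ℝ}

lemma setIntegral_sq_sub_setAverage (hs : P s ≠ ⊤) (hf : IntegrableOn f s P)
    (hf2 : IntegrableOn (fun ω => f ω ^ 2) s P) :
    ∫ ω in s, (f ω - ⨍ ω' in s, f ω' ∂P) ^ 2 ∂P
      = ∫ ω in s, f ω ^ 2 ∂P - (∫ ω in s, f ω ∂P) ^ 2 / P.real s := by
  set a := ⨍ ω' in s, f ω' ∂P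
  have ha : P.real s * a = ∫ ω in s, f ω ∂P := measure_smul_setAverage f hs
  have hexpand : ∫ ω in s, (f ω - a) ^ 2 ∂P
      = ∫ ω in s, f ω ^ 2 ∂P - 2 * a * ∫ ω in s, f ω ∂P + P.real s * a ^ 2 := by
    have hfun : (fun ω => (f ω - a) ^ 2) = fun ω => f ω ^ 2 - 2 * a * f ω + a ^ 2 := by
      funext ω; ring
    have hlin : IntegrableOn (fun ω => f ω ^ 2 - 2 * a * f ω) s P := hf2.sub (hf.const_mul _)
    rw [hfun, integral_add hlin (integrableOn_const (C := a ^ 2) hs),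
      integral_sub hf2 (hf.const_mul _), integral_const_mul, setIntegral_const, smul_eq_mul]
  rcases eq_or_ne (P.real s) 0 with h0 | h0
  · have hP : P s = 0 := (measureReal_eq_zero_iff hs).mp h0
    simp [Measure.restrict_eq_zero.mpr hP]
  · rw [hexpand, ← ha]
    field_simp
    ring

lemma sq_setIntegral_div_le (hs : P s ≠ ⊤) (hf : IntegrableOn f s P)
    (hf2 : IntegrableOn (fun ω => f ω ^ 2) s P) :
    (∫ ω in s, f ω ∂P) ^ 2 / P.real s ≤ ∫ ω in s, f ω ^ 2 ∂P := by
  have hnonneg : 0 ≤ ∫ ω in s, (f ω - ⨍ ω' in s, f ω' ∂P) ^ 2 ∂P :=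
    integral_nonneg fun ω => sq_nonneg _
  linarith [setIntegral_sq_sub_setAverage hs hf hf2]

lemma sq_setIntegral_le_measureReal_mul (hs : P s ≠ ⊤) (hf : IntegrableOn f s P)
    (hf2 : IntegrableOn (fun ω => f ω ^ 2) s P) :
    (∫ ω in s, f ω ∂P) ^ 2 ≤ P.real s * ∫ ω in s, f ω ^ 2 ∂P := by
  rcases (measureReal_nonneg : 0 ≤ P.real s).eq_or_lt with h0 | hpos
  · have hP : P s = 0 := (measureReal_eq_zero_iff hs).mp h0.symm
    simp [Measure.restrict_eq_zero.mpr hP]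
  · exact (div_le_iff₀' hpos).mp (sq_setIntegral_div_le hs hf hf2)

end SetIntegral

lemma tendsto_setIntegral_preimage_Iic_atBot {Ω : Type*} [MeasurableSpace Ω]
    {P : Measure Ω} {Z f : Ω → ℝ} (hZ : Measurable Z) (hf : Integrable f P) :
    Tendsto (fun t => ∫ ω in Z ⁻¹' Iic t, f ω ∂P) atBot (𝓝 0) := by
  have hempty : ⋂ t : ℝᵒᵈ, Z ⁻¹' Iic (OrderDual.ofDual t) = ∅ := by
    refine eq_empty_iff_forall_notMem.mpr fun ω hω => ?_
    have : Z ω ≤ Z ω - 1 := mem_iInter.mp hω (OrderDual.toDual (Z ω - 1))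
    linarith
  have h := tendsto_setIntegral_of_antitone (μ := P) (f := f) (ι := ℝᵒᵈ)
    (s := fun t => Z ⁻¹' Iic (OrderDual.ofDual t)) (fun _ => hZ measurableSet_Iic)
    (fun _ _ hst => preimage_mono (Iic_subset_Iic.mpr hst)) ⟨0, hf.integrableOn⟩
  rw [hempty, Measure.restrict_empty, integral_zero_measure] at h
  exact h

lemma integral_sq_sub_condExp_const_add_mul {Ω : Type*} {m mΩ : MeasurableSpace Ω}
    {P : Measure Ω} [IsFiniteMeasure P] (hm : m ≤ mΩ) {W : Ω → ℝ} (hW : Integrable W P)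
    (a b : ℝ) :
    ∫ ω, (a + b * W ω - P[fun ω => a + b * W ω | m] ω) ^ 2 ∂P
      = b ^ 2 * ∫ ω, (W ω - P[W | m] ω) ^ 2 ∂P := by
  have hlin : P[fun ω => a + b * W ω | m] =ᵐ[P] fun ω => a + b * P[W | m] ω := by
    have hsplit : (fun ω => a + b * W ω) = (fun _ => a) + b • W := rfl
    rw [hsplit]
    filter_upwards [condExp_add (integrable_const a) (hW.smul b) m, condExp_smul b W m]
      with ω hadd hsmul
    rw [hadd, Pi.add_apply, condExp_const hm, hsmul]
    rfl
  rw [← integral_const_mul]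
  refine integral_congr_ae ?_
  filter_upwards [hlin] with ω hω
  rw [hω]
  ring

section FinitePartition

variable {Ω ι : Type*} [MeasurableSpace Ω] {P : Measure Ω}
  [Fintype ι] [MeasurableSpace ι] [MeasurableSingletonClass ι] {Y : Ω → ι}

lemma integral_eq_sum_setIntegral_fiber (hY : Measurable Y) {f : Ω → ℝ} (hf : Integrable f P) :
    ∫ ω, f ω ∂P = ∑ i, ∫ ω in Y ⁻¹' {i}, f ω ∂P := by
  have hcover : ⋃ i, Y ⁻¹' {i} = univ := by ext ω; simp
  have hdisj : Pairwise (Function.onFun Disjoint fun i => Y ⁻¹' {i}) := fun i j hij =>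
    (disjoint_singleton.mpr hij).preimage Y
  rw [← setIntegral_univ, ← hcover,
    integral_iUnion_fintype (fun i => hY (measurableSet_singleton i)) hdisj
      (fun i => hf.integrableOn)]

lemma condExp_comap_ae_eq_setAverage [IsFiniteMeasure P] (hY : Measurable Y) {X : Ω → ℝ}
    (hX : Integrable X P) :
    P[X | MeasurableSpace.comap Y inferInstance] =ᵐ[P] fun ω => ⨍ ω' in Y ⁻¹' {Y ω}, X ω' ∂P := by
  set c : ι → ℝ := fun i => ⨍ ω' in Y ⁻¹' {i}, X ω' ∂P
  have hc : Integrable (c ∘ Y) P :=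
    (Integrable.of_finite (μ := P.map Y)).comp_measurable hY
  refine (ae_eq_condExp_of_forall_setIntegral_eq hY.comap_le hX
    (fun _ _ _ => hc.integrableOn) ?_ ?_).symm
  · rintro _ ⟨t, -, rfl⟩ -
    rw [integral_eq_sum_setIntegral_fiber (P := P.restrict (Y ⁻¹' t)) hY hc.restrict,
      integral_eq_sum_setIntegral_fiber (P := P.restrict (Y ⁻¹' t)) hY hX.restrict]
    refine Finset.sum_congr rfl fun i _ => ?_
    simp only [Measure.restrict_restrict (hY (measurableSet_singleton i))]
    by_cases hi : i ∈ t
    · have hsub : Y ⁻¹' {i} ∩ Y ⁻¹' t = Y ⁻¹' {i} :=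
        inter_eq_left.mpr (preimage_mono (singleton_subset_iff.mpr hi))
      rw [hsub, setIntegral_congr_fun (f := c ∘ Y) (hY (measurableSet_singleton i))
          (g := fun _ => c i) fun ω hω => congrArg c hω,
        setIntegral_const, measure_smul_setAverage _ (measure_ne_top P _)]
    · have hempty : Y ⁻¹' {i} ∩ Y ⁻¹' t = ∅ := by
        rw [← preimage_inter, singleton_inter_eq_empty.mpr hi, preimage_empty]
      simp [hempty]
  · exact ((measurable_of_finite c).comp (comap_measurable Y)).aestronglyMeasurable

end FinitePartition

section Distortion

variable {Ω ι : Type*} [MeasurableSpace Ω] {P : Measure Ω} [Fintype ι] {Y : Ω → ι}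

/-- `∫ (P[Z | σ(Y)])²`: the part of the second moment of `Z` captured by the cells of `Y`. -/
noncomputable def explainedSecondMoment (P : Measure Ω) (Y : Ω → ι) (Z : Ω → ℝ) : ℝ :=
  ∑ i, (∫ ω in Y ⁻¹' {i}, Z ω ∂P) ^ 2 / P.real (Y ⁻¹' {i})

lemma explainedSecondMoment_nonneg (Z : Ω → ℝ) : 0 ≤ explainedSecondMoment P Y Z :=
  Finset.sum_nonneg fun _ _ => div_nonneg (sq_nonneg _) measureReal_nonneg

lemma sq_setIntegral_div_le_explainedSecondMoment (Z : Ω → ℝ) (i : ι) :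
    (∫ ω in Y ⁻¹' {i}, Z ω ∂P) ^ 2 / P.real (Y ⁻¹' {i}) ≤ explainedSecondMoment P Y Z :=
  Finset.single_le_sum (f := fun j => (∫ ω in Y ⁻¹' {j}, Z ω ∂P) ^ 2 / P.real (Y ⁻¹' {j}))
    (fun _ _ => div_nonneg (sq_nonneg _) measureReal_nonneg) (Finset.mem_univ i)

lemma explainedSecondMoment_pos [IsFiniteMeasure P] {Z : Ω → ℝ} (i : ι)
    (hi : ∫ ω in Y ⁻¹' {i}, Z ω ∂P ≠ 0) : 0 < explainedSecondMoment P Y Z := by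
  have hmass : P.real (Y ⁻¹' {i}) ≠ 0 := fun h0 =>
    hi (setIntegral_measure_zero Z ((measureReal_eq_zero_iff (measure_ne_top P _)).mp h0))
  exact (div_pos (pow_two_pos_of_ne_zero hi) (measureReal_nonneg.lt_of_ne' hmass)).trans_le
    (sq_setIntegral_div_le_explainedSecondMoment Z i)

variable [MeasurableSpace ι] [MeasurableSingletonClass ι]

lemma integral_sq_sub_condExp_comap_eq [IsFiniteMeasure P] (hY : Measurable Y) {X : Ω → ℝ}
    (hX : MemLp X 2 P) :
    ∫ ω, (X ω - P[X | MeasurableSpace.comap Y inferInstance] ω) ^ 2 ∂P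
      = ∫ ω, X ω ^ 2 ∂P - explainedSecondMoment P Y X := by
  set c : ι → ℝ := fun i => ⨍ ω' in Y ⁻¹' {i}, X ω' ∂P
  have hX2 : Integrable (fun ω => X ω ^ 2) P := hX.integrable_sq
  have hc : MemLp (c ∘ Y) 2 P := MemLp.of_discrete.comp_of_map hY.aemeasurable
  calc ∫ ω, (X ω - P[X | MeasurableSpace.comap Y inferInstance] ω) ^ 2 ∂P
      = ∫ ω, (X ω - c (Y ω)) ^ 2 ∂P := by
        refine integral_congr_ae ?_
        filter_upwards [condExp_comap_ae_eq_setAverage hY (hX.integrable one_le_two)] with ω hω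
        rw [hω]
    _ = ∑ i, ∫ ω in Y ⁻¹' {i}, (X ω - c i) ^ 2 ∂P := by
        have hsq : Integrable (fun ω => (X ω - c (Y ω)) ^ 2) P := (hX.sub hc).integrable_sq
        rw [integral_eq_sum_setIntegral_fiber hY hsq]
        refine Finset.sum_congr rfl fun i _ => setIntegral_congr_fun
          (hY (measurableSet_singleton i)) fun ω hω => ?_
        rw [(hω : Y ω = i)]
    _ = ∑ i, (∫ ω in Y ⁻¹' {i}, X ω ^ 2 ∂P - (∫ ω in Y ⁻¹' {i}, X ω ∂P) ^ 2 / P.real (Y ⁻¹' {i})) :=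
        Finset.sum_congr rfl fun i _ => setIntegral_sq_sub_setAverage (measure_ne_top P _)
          (hX.integrable one_le_two).integrableOn hX2.integrableOn
    _ = ∫ ω, X ω ^ 2 ∂P - explainedSecondMoment P Y X := by
        rw [Finset.sum_sub_distrib, ← integral_eq_sum_setIntegral_fiber hY hX2,
          explainedSecondMoment]

/-- The cell `j` is controlled through its complement by centring: `∫_{Y = j} Z = -∫_{Y ≠ j} Z`. -/
lemma explainedSecondMoment_le [IsFiniteMeasure P] (hY : Measurable Y) {Z : Ω → ℝ}
    (hZ : MemLp Z 2 P) (hZ0 : ∫ ω, Z ω ∂P = 0) (j : ι)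
    (hj : P.real (Y ⁻¹' {j})ᶜ ≤ P.real (Y ⁻¹' {j})) :
    explainedSecondMoment P Y Z ≤ 2 * ∫ ω in (Y ⁻¹' {j})ᶜ, Z ω ^ 2 ∂P := by
  classical
  set A : ι → Set Ω := fun i => Y ⁻¹' {i}
  set T := ∫ ω in (A j)ᶜ, Z ω ^ 2 ∂P
  have hA : ∀ i, MeasurableSet (A i) := fun i => hY (measurableSet_singleton i)
  have hZ1 : Integrable Z P := hZ.integrable one_le_two
  have hZ2 : Integrable (fun ω => Z ω ^ 2) P := hZ.integrable_sq
  have hT : 0 ≤ T := integral_nonneg fun ω => sq_nonneg (Z ω)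
  have hothers : ∑ i ∈ Finset.univ.erase j, ∫ ω in A i, Z ω ^ 2 ∂P = T := by
    have hsum := integral_eq_sum_setIntegral_fiber hY hZ2
    rw [← Finset.add_sum_erase _ _ (Finset.mem_univ j)] at hsum
    linarith [integral_add_compl (hA j) hZ2]
  have hcells : ∑ i ∈ Finset.univ.erase j, (∫ ω in A i, Z ω ∂P) ^ 2 / P.real (A i) ≤ T :=
    hothers ▸ Finset.sum_le_sum fun i _ =>
      sq_setIntegral_div_le (measure_ne_top P _) hZ1.integrableOn hZ2.integrableOn
  have hcell_j : (∫ ω in A j, Z ω ∂P) ^ 2 / P.real (A j) ≤ T := by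
    have hcenter : ∫ ω in A j, Z ω ∂P = -∫ ω in (A j)ᶜ, Z ω ∂P := by
      linarith [integral_add_compl (hA j) hZ1]
    have hcs := sq_setIntegral_le_measureReal_mul (measure_ne_top P (A j)ᶜ)
      hZ1.integrableOn hZ2.integrableOn
    rw [hcenter, neg_sq]
    rcases (measureReal_nonneg : 0 ≤ P.real (A j)).eq_or_lt with h0 | hpos
    · rw [← h0, div_zero]
      exact hT
    · rw [div_le_iff₀ hpos]
      nlinarith
  rw [explainedSecondMoment, ← Finset.add_sum_erase _ _ (Finset.mem_univ j)]
  linarith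

lemma tendsto_explainedSecondMoment_atBot [IsProbabilityMeasure P] {W : Ω → ℝ}
    (hWm : Measurable W) (hW : MemLp W 2 P) (hW0 : ∫ ω, W ω ∂P = 0) {Y : ℝ → Ω → ι}
    (hY : ∀ t, Measurable (Y t)) (j : ι) (hcell : ∀ t, Y t ⁻¹' {j} = W ⁻¹' Ioi t) :
    Tendsto (fun t => explainedSecondMoment P (Y t) W) atBot (𝓝 0) := by
  have hcompl : ∀ t, (Y t ⁻¹' {j})ᶜ = W ⁻¹' Iic t := fun t => by
    rw [hcell, ← preimage_compl, compl_Ioi]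
  have htail : Tendsto (fun t => 2 * ∫ ω in W ⁻¹' Iic t, W ω ^ 2 ∂P) atBot (𝓝 0) := by
    simpa using (tendsto_setIntegral_preimage_Iic_atBot hWm hW.integrable_sq).const_mul 2
  have hmass : ∀ᶠ t in atBot, P.real (W ⁻¹' Iic t) ≤ 1 / 2 := by
    have h := tendsto_setIntegral_preimage_Iic_atBot (P := P) hWm (integrable_const (1 : ℝ))
    simp only [setIntegral_one_eq_measureReal] at h
    exact h.eventually (ge_mem_nhds one_half_pos)
  refine tendsto_of_tendsto_of_tendsto_of_le_of_le' tendsto_const_nhds htail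
    (Eventually.of_forall fun t => explainedSecondMoment_nonneg W) ?_
  filter_upwards [hmass] with t ht
  have hbig := probReal_compl_eq_one_sub (μ := P) ((hY t) (measurableSet_singleton j))
  rw [← hcompl t]
  exact explainedSecondMoment_le (hY t) hW hW0 j (by rw [hcompl] at hbig ⊢; linarith)

end Distortion

lemma setIntegral_preimage_Ioi_zero_pos {Ω : Type*} [MeasurableSpace Ω] {P : Measure Ω}
    {W : Ω → ℝ} (hWm : Measurable W) {μ : ℝ} {v : NNReal} (hv : v ≠ 0)
    (hW : P.map W = gaussianReal μ v) (hint : Integrable W P) :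
    0 < ∫ ω in W ⁻¹' Ioi 0, W ω ∂P := by
  have hmass : 0 < P (W ⁻¹' Ioi 0) := by
    rw [← Measure.map_apply hWm measurableSet_Ioi, hW]
    refine pos_iff_ne_zero.mpr fun h => ?_
    simpa using gaussianReal_absolutelyContinuous' μ hv h
  have hnonneg : 0 ≤ᵐ[P.restrict (W ⁻¹' Ioi 0)] W :=
    (ae_restrict_iff' (hWm measurableSet_Ioi)).mpr (Eventually.of_forall fun ω hω => le_of_lt hω)
  have hsupp : Function.support W ∩ W ⁻¹' Ioi 0 = W ⁻¹' Ioi 0 :=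
    inter_eq_right.mpr fun ω (hω : 0 < W ω) => hω.ne'
  rwa [setIntegral_pos_iff_support_of_nonneg_ae hnonneg hint.integrableOn, hsupp]

lemma measurable_threshold_quantizer (θ : ℝ) :
    Measurable fun x : ℝ => if x ≤ -θ then (0 : Fin 3) else if x ≤ θ then 1 else 2 :=
  Measurable.ite measurableSet_Iic measurable_const
    (Measurable.ite measurableSet_Iic measurable_const measurable_const)

lemma threshold_quantizer_eq_two_iff {θ σ : ℝ} (hθ : 0 < θ) (hσ : 0 < σ) (t w : ℝ) :
    (if θ - σ * t + σ * w ≤ -θ then 0 else if θ - σ * t + σ * w ≤ θ then 1 else 2 : Fin 3) = 2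
      ↔ t < w := by
  split_ifs <;> simp only [Fin.reduceEq, false_iff, true_iff, not_lt] <;> nlinarith

/-- Dual effect of the control: for a Gaussian state `X_m = m + σW ∼ N(m, σ²)` and
the fixed three-cell threshold quantizer `ξ` with thresholds `±θ`, the quantization
distortion `Γ(m) = E[(X_m - E[X_m | σ(ξ ∘ X_m)])²]` is not constant in `m`. -/
theorem stmt14 {Ω : Type*} [MeasurableSpace Ω] (P : Measure Ω) [IsProbabilityMeasure P]
    (σ θ : ℝ) (hσ : 0 < σ) (hθ : 0 < θ)
    (W : Ω → ℝ) (hWm : Measurable W)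
    (hW : Measure.map W P = gaussianReal 0 1)
    (ξ : ℝ → Fin 3)
    (hξ : ξ = fun x => if x ≤ -θ then 0 else if x ≤ θ then 1 else 2)
    (Γ : ℝ → ℝ)
    (hΓ : Γ = fun m =>
      ∫ ω, ((m + σ * W ω) -
          (P[(fun ω => m + σ * W ω) |
            MeasurableSpace.comap (fun ω => ξ (m + σ * W ω)) inferInstance]) ω) ^ 2 ∂P) :
    ∃ m₁ m₂ : ℝ, Γ m₁ ≠ Γ m₂ := by
  subst hξ
  have hW2 : MemLp W 2 P :=
    (hW ▸ memLp_id_gaussianReal' 2 (by norm_num)).comp_of_map hWm.aemeasurable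
  have hW0 : ∫ ω, W ω ∂P = 0 :=
    (HasLaw.integral_eq ⟨hWm.aemeasurable, hW⟩).trans integral_id_gaussianReal
  set Y : ℝ → Ω → Fin 3 := fun t ω =>
    if θ - σ * t + σ * W ω ≤ -θ then 0 else if θ - σ * t + σ * W ω ≤ θ then 1 else 2
  have hYm : ∀ t, Measurable (Y t) := fun t => (measurable_threshold_quantizer θ).comp (by fun_prop)
  have hcell : ∀ t, Y t ⁻¹' {2} = W ⁻¹' Ioi t := fun t =>
    ext fun ω => threshold_quantizer_eq_two_iff hθ hσ t (W ω)
  have hΓY : ∀ t, Γ (θ - σ * t) = σ ^ 2 * (∫ ω, W ω ^ 2 ∂P - explainedSecondMoment P (Y t) W) :=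
    fun t => by
      rw [hΓ]
      exact (integral_sq_sub_condExp_const_add_mul (hYm t).comap_le (hW2.integrable one_le_two)
        _ _).trans (congrArg _ (integral_sq_sub_condExp_comap_eq (hYm t) hW2))
  have hq : 0 < explainedSecondMoment P (Y 0) W := explainedSecondMoment_pos 2 <| by
    rw [hcell 0]
    exact (setIntegral_preimage_Ioi_zero_pos hWm one_ne_zero hW (hW2.integrable one_le_two)).ne'
  obtain ⟨t, ht⟩ := ((tendsto_explainedSecondMoment_atBot hWm hW2 hW0 hYm 2 hcell).eventually
    (gt_mem_nhds hq)).exists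
  refine ⟨θ - σ * 0, θ - σ * t, fun h => ?_⟩
  rw [hΓY, hΓY] at h
  linarith [mul_left_cancel₀ (pow_ne_zero 2 hσ.ne') h]
end
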